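/- arXiv:math/0403296 — 7 statements merged into one kernel-verified Lean document; each statement's English description precedes it below -/
import Mathlib

section
/- The map (w,x,y,z) ↦ ((w+x+y-z)/2, (w+x-y+z)/2, (w-x+y+z)/2) gives a bijection between integer solutions of Q_D(w,x,y,z) = 4m with w = -n and integer solutions (X,Y,Z) of XY + XZ + YZ = n² - m, with inverse (X,Y,Z) ↦ (-n, n+X+Y, n+X+Z, n+Y+Z). -/
lemma descartes_even (m : ℤ) (w x y z : ℤ)
    (h : 2 * (w ^ 2 + x ^ 2 + y ^ 2 + z ^ 2) - (w + x + y + z) ^ 2 = 4 * m) :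
    Even (w + x + y + z) := by
  have h2 : Even ((w + x + y + z) ^ 2) := by
    refine ⟨(w ^ 2 + x ^ 2 + y ^ 2 + z ^ 2) - 2 * m, by linarith⟩
  exact (Int.even_pow.mp h2).1

lemma descartes_tern (m n : ℤ) (w x y z k : ℤ) (hw : w = -n)
    (hk : 2 * k = w + x + y + z)
    (h : 2 * (w ^ 2 + x ^ 2 + y ^ 2 + z ^ 2) - (w + x + y + z) ^ 2 = 4 * m) :
    (k - z) * (k - y) + (k - z) * (k - x) + (k - y) * (k - x) = n ^ 2 - m := by
  have h4 : 4 * ((k - z) * (k - y) + (k - z) * (k - x) + (k - y) * (k - x))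
      = 4 * (n ^ 2 - m) := by
    subst hw
    linear_combination (6 * k - 3 * n - x - y - z) * hk - h
  linarith

/-- Bijection between integer solutions of `Q_D(w,x,y,z) = 4m` with `w = -n`
and integer solutions of `XY + XZ + YZ = n² - m`, given by
`(X,Y,Z) = ((w+x+y-z)/2, (w+x-y+z)/2, (w-x+y+z)/2)` with inverse
`(X,Y,Z) ↦ (-n, n+X+Y, n+X+Z, n+Y+Z)`. -/
theorem descartes_ternary_bijection (m n : ℤ) :
    ∃ e : {p : ℤ × ℤ × ℤ × ℤ //
        2 * (p.1 ^ 2 + p.2.1 ^ 2 + p.2.2.1 ^ 2 + p.2.2.2 ^ 2) -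
          (p.1 + p.2.1 + p.2.2.1 + p.2.2.2) ^ 2 = 4 * m ∧ p.1 = -n} ≃
      {q : ℤ × ℤ × ℤ // q.1 * q.2.1 + q.1 * q.2.2 + q.2.1 * q.2.2 = n ^ 2 - m},
      (∀ p, 2 * (e p).val.1 = p.val.1 + p.val.2.1 + p.val.2.2.1 - p.val.2.2.2 ∧
            2 * (e p).val.2.1 = p.val.1 + p.val.2.1 - p.val.2.2.1 + p.val.2.2.2 ∧
            2 * (e p).val.2.2 = p.val.1 - p.val.2.1 + p.val.2.2.1 + p.val.2.2.2) ∧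
      (∀ q, (e.symm q).val =
        (-n, n + q.val.1 + q.val.2.1, n + q.val.1 + q.val.2.2,
          n + q.val.2.1 + q.val.2.2)) := by
  refine ⟨{
    toFun := fun p =>
      ⟨((p.val.1 + p.val.2.1 + p.val.2.2.1 + p.val.2.2.2) / 2 - p.val.2.2.2,
        (p.val.1 + p.val.2.1 + p.val.2.2.1 + p.val.2.2.2) / 2 - p.val.2.2.1,
        (p.val.1 + p.val.2.1 + p.val.2.2.1 + p.val.2.2.2) / 2 - p.val.2.1), ?_⟩
    invFun := fun q =>
      ⟨(-n, n + q.val.1 + q.val.2.1, n + q.val.1 + q.val.2.2,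
          n + q.val.2.1 + q.val.2.2), ?_, rfl⟩
    left_inv := ?_
    right_inv := ?_ }, ?_, ?_⟩
  · obtain ⟨p, hQ, hw⟩ := p
    obtain ⟨w, x, y, z⟩ := p
    simp only at hQ hw ⊢
    have he := descartes_even m w x y z hQ
    obtain ⟨t, ht⟩ := he
    have hk : 2 * ((w + x + y + z) / 2) = w + x + y + z := by omega
    exact descartes_tern m n w x y z _ hw hk hQ
  · obtain ⟨⟨X, Y, Z⟩, hq⟩ := q
    simp only at hq ⊢
    ring_nf
    ring_nf at hq
    linarith
  · rintro ⟨⟨w, x, y, z⟩, hQ, hw⟩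
    have he := descartes_even m w x y z hQ
    simp only at hQ hw he
    obtain ⟨t, ht⟩ := he
    ext <;> simp <;> omega
  · rintro ⟨⟨X, Y, Z⟩, hq⟩
    ext <;> simp <;> omega
  · rintro ⟨⟨w, x, y, z⟩, hQ, hw⟩
    have he := descartes_even m w x y z hQ
    obtain ⟨t, ht⟩ := he
    refine ⟨?_, ?_, ?_⟩ <;> simp [Equiv.coe_fn_mk] <;> omega
  · intro q
    rfl
end

section
/- If (a,b,c,d) is a root quadruple with Q_D(a,b,c,d) = k and k > 0, then a < 0. -/
/-- For a root quadruple with `Q_D = k > 0`, the smallest entry is negative. -/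
theorem root_quadruple_neg_min (a b c d k : ℤ)
    (hab : a ≤ b) (hbc : b ≤ c) (hcd : c ≤ d)
    (hL : 0 < a + b + c + d) (hroot : d ≤ a + b + c) (hd : 0 < d)
    (hQ : 2 * (a ^ 2 + b ^ 2 + c ^ 2 + d ^ 2) - (a + b + c + d) ^ 2 = k)
    (hk : 0 < k) :
    a < 0 := by
  by_contra h
  push_neg at h
  nlinarith [mul_nonneg h (le_trans h hab), mul_le_mul_of_nonneg_left hbc h,
    mul_le_mul_of_nonneg_left hbc (le_trans h hab),
    mul_nonneg (mul_nonneg h (le_trans h hab)) (by linarith : (0:ℤ) ≤ c),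
    mul_le_mul_of_nonneg_left hroot (le_of_lt hd),
    sq_nonneg (c - d), sq_nonneg (a - b)]
end

section
/- If (a,b,c,d) is a root quadruple with Q_D(a,b,c,d) = k and k ≤ 0, then a ≤ √|k|. -/
/-- For a root quadruple with `Q_D = k ≤ 0`, the smallest entry satisfies `a ≤ √|k|`. -/
theorem root_quadruple_min_bound (a b c d k : ℤ)
    (hab : a ≤ b) (hbc : b ≤ c) (hcd : c ≤ d)
    (hL : 0 < a + b + c + d) (hroot : d ≤ a + b + c) (hd : 0 < d)
    (hQ : 2 * (a ^ 2 + b ^ 2 + c ^ 2 + d ^ 2) - (a + b + c + d) ^ 2 = k)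
    (hk : k ≤ 0) :
    (a : ℝ) ≤ Real.sqrt |(k : ℝ)| := by
  rcases le_or_gt a 0 with ha | ha
  · exact le_trans (by exact_mod_cast ha) (Real.sqrt_nonneg _)
  · have key : a ^ 2 ≤ -k := by
      nlinarith [mul_nonneg (sub_nonneg.2 hab) (sub_nonneg.2 hbc),
        mul_nonneg (sub_nonneg.2 (hab.trans hbc)) (sub_nonneg.2 hcd),
        mul_nonneg (sub_nonneg.2 hcd) (sub_nonneg.2 hroot),
        mul_pos ha hd, mul_pos ha (ha.trans_le hab),
        mul_nonneg (sub_nonneg.2 hroot) ha.le]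
    have h2 : (a : ℝ) ^ 2 ≤ |(k : ℝ)| := by
      rw [abs_of_nonpos (by exact_mod_cast hk)]
      exact_mod_cast key
    have := Real.sqrt_le_sqrt h2
    rwa [Real.sqrt_sq (by positivity : (0:ℝ) ≤ (a:ℝ))] at this
end

section
/- If (a,b,c,d) is a root quadruple with Q_D(a,b,c,d) = k, ordered a ≤ b ≤ c ≤ d, then a = b+c+d - √(4(bc+bd+cd)+k); that is, the negative square root sign must hold when solving the Descartes equation for the smallest element. -/
/-- For a root quadruple, the smallest element is given by the negative branch
of the square root when solving the Descartes equation. -/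
theorem root_quadruple_sqrt_formula (a b c d k : ℤ)
    (hab : a ≤ b) (hbc : b ≤ c) (hcd : c ≤ d)
    (hL : 0 < a + b + c + d) (hroot : d ≤ a + b + c) (hd : 0 < d)
    (hQ : 2 * (a ^ 2 + b ^ 2 + c ^ 2 + d ^ 2) - (a + b + c + d) ^ 2 = k) :
    (a : ℝ) = b + c + d - Real.sqrt (4 * ((b : ℝ) * c + b * d + c * d) + k) := by
  have hb : 0 ≤ b := by nlinarith
  have hsq : (4 * ((b : ℝ) * c + b * d + c * d) + k) = ((b : ℝ) + c + d - a) ^ 2 := by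
    have : ((k : ℝ)) = 2 * ((a:ℝ) ^ 2 + b ^ 2 + c ^ 2 + d ^ 2) - ((a:ℝ) + b + c + d) ^ 2 := by
      exact_mod_cast hQ.symm
    rw [this]; ring
  have hnn : (0 : ℝ) ≤ (b : ℝ) + c + d - a := by
    have : (a : ℝ) ≤ b := by exact_mod_cast hab
    have hc : (0:ℝ) ≤ c := by exact_mod_cast hb.trans hbc
    have hd' : (0:ℝ) ≤ d := by exact_mod_cast (hb.trans (hbc.trans hcd))
    linarith
  rw [hsq, Real.sqrt_sq hnn]
  ring
end

section
/- For each integer l ≥ 0 and each integer c ≥ max(l,1), the quadruple (-l, l, c, c) satisfies Q_D(-l,l,c,c) = 4l² and is a root quadruple (when ordered as -l ≤ l ≤ c ≤ c). In particular, for k = 4l² there are infinitely many root quadruples with smallest element -l. -/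
/-- For each `l ≥ 0` and `c ≥ max l 1`, the quadruple `(-l, l, c, c)` satisfies
`Q_D = 4l²` and is a root quadruple; in particular there are infinitely many
root quadruples for `k = 4l²` with smallest element `-l`. -/
theorem infinite_root_quadruple_family (l : ℤ) (hl : 0 ≤ l) :
    (∀ c : ℤ, max l 1 ≤ c →
      2 * ((-l) ^ 2 + l ^ 2 + c ^ 2 + c ^ 2) - (-l + l + c + c) ^ 2 = 4 * l ^ 2 ∧
      -l ≤ l ∧ l ≤ c ∧ 0 < -l + l + c + c ∧ c ≤ -l + l + c ∧ 0 < c) ∧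
    {p : ℤ × ℤ × ℤ × ℤ |
      2 * (p.1 ^ 2 + p.2.1 ^ 2 + p.2.2.1 ^ 2 + p.2.2.2 ^ 2) -
          (p.1 + p.2.1 + p.2.2.1 + p.2.2.2) ^ 2 = 4 * l ^ 2 ∧
      p.1 = -l ∧ p.1 ≤ p.2.1 ∧ p.2.1 ≤ p.2.2.1 ∧ p.2.2.1 ≤ p.2.2.2 ∧
      0 < p.1 + p.2.1 + p.2.2.1 + p.2.2.2 ∧
      p.2.2.2 ≤ p.1 + p.2.1 + p.2.2.1 ∧ 0 < p.2.2.2}.Infinite := by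
  have key : ∀ c : ℤ, max l 1 ≤ c →
      2 * ((-l) ^ 2 + l ^ 2 + c ^ 2 + c ^ 2) - (-l + l + c + c) ^ 2 = 4 * l ^ 2 ∧
      -l ≤ l ∧ l ≤ c ∧ 0 < -l + l + c + c ∧ c ≤ -l + l + c ∧ 0 < c := by
    intro c hc
    have h1 : l ≤ c := le_trans (le_max_left _ _) hc
    have h2 : (1 : ℤ) ≤ c := le_trans (le_max_right _ _) hc
    refine ⟨by ring, by linarith, h1, by linarith, by linarith, by linarith⟩
  refine ⟨key, ?_⟩
  apply Set.infinite_of_injective_forall_mem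
    (f := fun n : ℕ => ((-l, l, max l 1 + n, max l 1 + n) : ℤ × ℤ × ℤ × ℤ))
  · intro a b hab
    simp only [Prod.mk.injEq] at hab
    have := hab.2.2.1
    omega
  · intro n
    have hc : max l 1 ≤ max l 1 + (n : ℤ) := by simp
    obtain ⟨hQ, h1, h2, h3, h4, h5⟩ := key _ hc
    exact ⟨hQ, rfl, h1, h2, le_refl _, h3, h4, h5⟩
end

section
/- If (a,b,c,d) is an exceptional quadruple for Q_D = k, i.e., an integer quadruple with a ≤ b ≤ c ≤ d, a+b+c+d ≥ 0, a+b+c ≤ 0 < d, and |Sⱼ(a,b,c,d)| ≥ |(a,b,c,d)| for all four Apollonian generators Sⱼ (where |v| denotes the sum of absolute values of coordinates), then k ≥ 1 and a²+b²+c²+d² ≤ 2k². -/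
/-- An exceptional quadruple for `Q_D = k` forces `k ≥ 1` and has Euclidean
height squared at most `2k²`. -/
theorem exceptional_quadruple_bound (a b c d k : ℤ)
    (hab : a ≤ b) (hbc : b ≤ c) (hcd : c ≤ d)
    (hL : 0 ≤ a + b + c + d) (habc : a + b + c ≤ 0) (hd : 0 < d)
    (hQ : 2 * (a ^ 2 + b ^ 2 + c ^ 2 + d ^ 2) - (a + b + c + d) ^ 2 = k)
    (h1 : |a| + |b| + |c| + |d| ≤ |2 * (b + c + d) - a| + |b| + |c| + |d|)
    (h2 : |a| + |b| + |c| + |d| ≤ |a| + |2 * (a + c + d) - b| + |c| + |d|)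
    (h3 : |a| + |b| + |c| + |d| ≤ |a| + |b| + |2 * (a + b + d) - c| + |d|)
    (h4 : |a| + |b| + |c| + |d| ≤ |a| + |b| + |c| + |2 * (a + b + c) - d|) :
    1 ≤ k ∧ a ^ 2 + b ^ 2 + c ^ 2 + d ^ 2 ≤ 2 * k ^ 2 := by
  have he : 0 ≤ -(a + b + c) := by linarith
  have hse : 0 ≤ (a + b + c + d) * (-(a + b + c)) := mul_nonneg hL he
  have hd2 : d ^ 2 ≤ k := by nlinarith [sq_nonneg a, sq_nonneg b, sq_nonneg c, sq_nonneg (a + b + c)]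
  have hk1 : 1 ≤ k := by nlinarith [hd2, hd]
  have habc2 : 2 * (a ^ 2 + b ^ 2 + c ^ 2) ≤ k := by
    nlinarith [sq_nonneg (a + b + c + d), sq_nonneg (a + b + c)]
  exact ⟨hk1, by nlinarith [hd2, habc2, hk1]⟩
end

section
/- If integers b ≤ 0 < c ≤ d with |b| ≤ |c| ≤ |d| and b ≤ -1 satisfy F(b,c,d) := b² + c² + d² - 2(bc + bd + cd) = 4, we reach a contradiction; equivalently, every integer solution of F(b,c,d) = 4 with |b| ≤ |c| ≤ |d|, b ≤ 0, c > 0, d > 0 has b = 0. -/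
/-- Every integer solution of `F(b,c,d) = b²+c²+d²-2(bc+bd+cd) = 4` with
`|b| ≤ |c| ≤ |d|`, `b ≤ 0`, `c > 0`, `d > 0` has `b = 0`. -/
theorem hyperbolic_zero_curvature_case1 (b c d : ℤ)
    (h1 : |b| ≤ |c|) (h2 : |c| ≤ |d|) (hb : b ≤ 0) (hc : 0 < c) (hd : 0 < d)
    (hF : b ^ 2 + c ^ 2 + d ^ 2 - 2 * (b * c + b * d + c * d) = 4) :
    b = 0 := by
  rw [abs_of_nonpos hb, abs_of_pos hc] at h1
  rw [abs_of_pos hc, abs_of_pos hd] at h2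
  by_contra h
  have hb1 : b ≤ -1 := by omega
  -- F = (b - c + d)^2 - 4*b*d
  have key : (b - c + d) ^ 2 - 4 * b * d = 4 := by ring_nf; linarith [hF]
  have hbd : -b * d ≥ 1 := by nlinarith
  have : -b * d = 1 := by nlinarith [sq_nonneg (b - c + d)]
  have hb' : b = -1 := by nlinarith
  have hd' : d = 1 := by nlinarith
  have hc' : c = 1 := by omega
  subst hb' hd' hc'
  norm_num at hF
end
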